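/- arXiv:2312.01198 — 2 statements merged into one kernel-verified Lean document; each statement's English description precedes it below -/
import Mathlib

section
/- Let ℒ be a nonempty class of countable linear orders downward closed under embeddability. Then ⊴^ℒ is transitive (on all linear orders) if and only if ℒ is closed under convex sums. -/
universe u v w x

/-- A `K`-convex partition of `L`: a partition of `L` into nonempty pieces indexed by `K`
such that `k < k'` iff every element of `P k` is below every element of `P k'`. -/
def IsConvexPartition {K : Type u} {L : Type v} [LinearOrder K] [LinearOrder L]
    (P : K → Set L) : Prop :=
  (∀ k, (P k).Nonempty) ∧ (∀ y : L, ∃! k, y ∈ P k) ∧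
    ∀ k k' : K, k < k' ↔ ∀ a ∈ P k, ∀ b ∈ P k', a < b

/-- `ℒ`-convex embeddability: `L ⊴^ℒ L'` iff there are `K ∈ ℒ`, a `K`-convex partition of `L`,
and an order embedding of `L` into `L'` mapping each piece onto a convex set. -/
def LCE (ℒ : Set LinOrd.{u}) (L : Type v) (L' : Type w)
    [LinearOrder L] [LinearOrder L'] : Prop :=
  ∃ K ∈ ℒ, ∃ P : ↥K → Set L, IsConvexPartition P ∧
    ∃ f : L ↪o L', ∀ k : ↥K, (⇑f '' P k).OrdConnected

/-- `ℒ` is closed under convex sums (ccs). -/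
def CCS (ℒ : Set LinOrd.{u}) : Prop :=
  ∀ K ∈ ℒ, ∀ K' ∈ ℒ, ∀ P : ↥K → Set ↥K',
    (∀ k, (P k).Nonempty) → (∀ k, (P k).OrdConnected) →
    (∀ k₀ k₁ : ↥K, k₀ < k₁ → ∀ a ∈ P k₀, ∀ b ∈ P k₁, a ≤ b) →
    ∃ M ∈ ℒ, Nonempty (Lex ((k : ↥K) × ↥(P k)) ≃o ↥M)

/-!
A `K`-convex partition of `L` is the same as a monotone surjection `π : L → K`: the pieces are
its fibres.

If `ℒ` is closed under convex sums and `L₁ ⊴ L₂ ⊴ L₃` via `π₁ : L₁ → A`, `f` and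
`π₂ : L₂ → B`, `g`, then the sets `S k = π₂ (f (π₁⁻¹ k)) ⊆ B` are nonempty, convex and
increasing in `k`, so `Σ k, S k` lies in `ℒ`, and `x ↦ (π₁ x, π₂ (f x))` together with `g ∘ f`
witnesses `L₁ ⊴ L₃`.

Conversely, given `K, K' ∈ ℒ` and increasing convex `P k ⊆ K'`, let `L = Σ k, P k` and let
`D k` be the convex hull of `P k × {0}` in `K' ×ₗ ℝ`. Then `L ⊴ Σ k, D k` with pieces indexed
by `⋃ k, P k ⊆ K'` (in `ℒ` by downward closure), and `Σ k, D k ⊴ K ×ₗ (K' ×ₗ ℝ)` with pieces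
indexed by `K`. Transitivity gives `L ⊴ K ×ₗ (K' ×ₗ ℝ)`; as `L` is countable and every
nontrivial interval of the target is uncountable, all pieces are singletons, so `L` is
isomorphic to the index order, which is in `ℒ`.
-/

open Set Function

namespace Sigma.Lex

variable {ι β : Type*} [LinearOrder ι] [LinearOrder β]

def toProdLex (S : ι → Set β) : (Σₗ i, S i) ↪o ι ×ₗ β :=
  OrderEmbedding.ofMapLEIff (fun p => toLex ((ofLex p).1, ((ofLex p).2 : β))) <| by
    intro p q
    rw [Prod.Lex.toLex_le_toLex, Sigma.Lex.le_def]
    obtain ⟨i, a⟩ := p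
    obtain ⟨j, b⟩ := q
    change i < j ∨ i = j ∧ (a : β) ≤ b ↔ i < j ∨ ∃ h : i = j, h ▸ a ≤ b
    refine or_congr_right ⟨?_, ?_⟩ <;> rintro ⟨rfl, hab⟩ <;> exact ⟨rfl, hab⟩

@[simp]
theorem toProdLex_apply (S : ι → Set β) (p : Σₗ i, S i) :
    toProdLex S p = toLex ((ofLex p).1, ((ofLex p).2 : β)) :=
  rfl

end Sigma.Lex

theorem Prod.Lex.mem_Icc_toLex_iff {α β : Type*} [PartialOrder α] [Preorder β] {a : α} {b₀ b₁ : β}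
    {z : α × β} : toLex z ∈ Icc (toLex (a, b₀)) (toLex (a, b₁)) ↔ z.1 = a ∧ z.2 ∈ Icc b₀ b₁ := by
  obtain ⟨c, d⟩ := z
  simp only [mem_Icc, Prod.Lex.toLex_le_toLex']
  constructor
  · rintro ⟨⟨hac, hd₀⟩, hca, hd₁⟩
    obtain rfl := le_antisymm hca hac
    exact ⟨rfl, hd₀ rfl, hd₁ rfl⟩
  · rintro ⟨rfl, hd₀, hd₁⟩
    exact ⟨⟨le_rfl, fun _ => hd₀⟩, le_rfl, fun _ => hd₁⟩

theorem Prod.Lex.not_countable_Icc {α β : Type*} [LinearOrder α] [LinearOrder β] [NoMaxOrder β]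
    (hβ : ∀ b₀ b₁ : β, b₀ < b₁ → ¬ (Icc b₀ b₁).Countable) {u v : α ×ₗ β} (huv : u < v) :
    ¬ (Icc u v).Countable := by
  obtain ⟨⟨a, b⟩, rfl⟩ := toLex.surjective u
  obtain ⟨⟨a', b'⟩, rfl⟩ := toLex.surjective v
  obtain ⟨c, hbc, hc⟩ : ∃ c, b < c ∧
      ∀ y ∈ Icc b c, toLex (a, y) ∈ Icc (toLex (a, b)) (toLex (a', b')) := by
    rcases Prod.Lex.toLex_lt_toLex.1 huv with h | ⟨rfl, h⟩
    · obtain ⟨c, hc⟩ := exists_gt b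
      exact ⟨c, hc, fun y hy => ⟨Prod.Lex.toLex_le_toLex.2 (Or.inr ⟨rfl, hy.1⟩),
        Prod.Lex.toLex_le_toLex.2 (Or.inl h)⟩⟩
    · exact ⟨b', h, fun y hy => Prod.Lex.mem_Icc_toLex_iff.2 ⟨rfl, hy⟩⟩
  exact fun hcount => hβ b c hbc ((hcount.preimage (f := fun y => toLex (a, y))
    fun _ _ h => (Prod.ext_iff.1 (toLex.injective h)).2).mono hc)

namespace Set

variable {α : Type*} [Preorder α]

def ordConnectedHull (s : Set α) : Set α :=
  {d | ∃ a ∈ s, ∃ b ∈ s, a ≤ d ∧ d ≤ b}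

theorem subset_ordConnectedHull (s : Set α) : s ⊆ s.ordConnectedHull :=
  fun a ha => ⟨a, ha, a, ha, le_rfl, le_rfl⟩

theorem ordConnected_ordConnectedHull (s : Set α) : s.ordConnectedHull.OrdConnected :=
  ⟨fun _ ⟨a, ha, _, _, had, _⟩ _ ⟨_, _, b, hb, _, hdb⟩ _ hz =>
    ⟨a, ha, b, hb, had.trans hz.1, hz.2.trans hdb⟩⟩

end Set

theorem Set.OrdConnected.image_of_monotone_surjective {α β : Type*} [LinearOrder α]
    [LinearOrder β] {s : Set α} (hs : s.OrdConnected) {π : α → β} (hπ : Monotone π)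
    (hπ' : Surjective π) : (π '' s).OrdConnected := by
  refine ⟨?_⟩
  rintro _ ⟨y₀, hy₀, rfl⟩ _ ⟨y₁, hy₁, rfl⟩ b ⟨hb₀, hb₁⟩
  obtain rfl | hb₀ := hb₀.eq_or_lt
  · exact mem_image_of_mem π hy₀
  obtain rfl | hb₁ := hb₁.eq_or_lt'
  · exact mem_image_of_mem π hy₁
  obtain ⟨c, rfl⟩ := hπ' b
  exact mem_image_of_mem π (hs.out hy₀ hy₁ ⟨(hπ.reflect_lt hb₀).le, (hπ.reflect_lt hb₁).le⟩)

section ConvexPartition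

variable {K : Type u} {L : Type v} [LinearOrder K] [LinearOrder L]

theorem isConvexPartition_fibers {π : L → K} (hπ : Monotone π) (hπ' : Surjective π) :
    IsConvexPartition fun k => π ⁻¹' {k} := by
  refine ⟨fun k => hπ' k, fun y => ⟨π y, rfl, fun k hk => hk.symm⟩, fun k k' => ⟨?_, ?_⟩⟩
  · rintro h a rfl b rfl
    exact hπ.reflect_lt h
  · intro h
    obtain ⟨a, rfl⟩ := hπ' k
    obtain ⟨b, rfl⟩ := hπ' k'
    exact (hπ (h a rfl b rfl).le).lt_of_ne fun hab => (h b hab.symm b rfl).false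

theorem IsConvexPartition.exists_eq_fibers {P : K → Set L} (hP : IsConvexPartition P) :
    ∃ π : L → K, Monotone π ∧ Surjective π ∧ P = fun k => π ⁻¹' {k} := by
  obtain ⟨hne, huniq, hlt⟩ := hP
  choose π hπ hπ' using huniq
  have hP : P = fun k => π ⁻¹' {k} := by
    ext k y
    exact ⟨fun hy => (hπ' y k hy).symm, fun hy => (show π y = k from hy) ▸ hπ y⟩
  subst hP
  refine ⟨π, fun y z hyz => not_lt.1 fun h => ?_, fun k => hne k, rfl⟩
  exact ((hlt _ _).1 h z rfl y rfl).not_ge hyz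

end ConvexPartition

section LCE

variable {ℒ : Set LinOrd.{u}} {L : Type v} {L' : Type w} [LinearOrder L] [LinearOrder L']

theorem lce_iff :
    LCE ℒ L L' ↔ ∃ K ∈ ℒ, ∃ π : L → K, Monotone π ∧ Surjective π ∧
      ∃ f : L ↪o L', ∀ k, (f '' (π ⁻¹' {k})).OrdConnected := by
  constructor
  · rintro ⟨K, hK, P, hP, f, hf⟩
    obtain ⟨π, hπ, hπ', rfl⟩ := hP.exists_eq_fibers
    exact ⟨K, hK, π, hπ, hπ', f, hf⟩
  · rintro ⟨K, hK, π, hπ, hπ', f, hf⟩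
    exact ⟨K, hK, _, isConvexPartition_fibers hπ hπ', f, hf⟩

theorem LCE.congr {A B : Type*} [LinearOrder A] [LinearOrder B]
    (eL : L ≃o A) (eL' : L' ≃o B) (h : LCE ℒ L L') : LCE ℒ A B := by
  obtain ⟨K, hK, π, hπ, hπ', f, hf⟩ := lce_iff.1 h
  refine lce_iff.2 ⟨K, hK, π ∘ eL.symm, hπ.comp eL.symm.monotone, hπ'.comp eL.symm.surjective,
    (eL.symm.toOrderEmbedding.trans f).trans eL'.toOrderEmbedding, fun k => ?_⟩
  have himage : (eL.symm.toOrderEmbedding.trans f).trans eL'.toOrderEmbedding ''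
      ((π ∘ eL.symm) ⁻¹' {k}) = eL' '' (f '' (π ⁻¹' {k})) := by
    ext z
    simp [eL.surjective.exists]
  rw [himage]
  exact ordConnected_image (hs := hf k) eL'

end LCE

theorem ordConnected_image_fiber_inter_fiber {L₁ L₂ L₃ A B : Type*} [LinearOrder L₁]
    [LinearOrder L₂] [LinearOrder L₃] {π₁ : L₁ → A} {π₂ : L₂ → B} {f : L₁ ↪o L₂} {g : L₂ ↪o L₃}
    (hf : ∀ k, (f '' (π₁ ⁻¹' {k})).OrdConnected) (hg : ∀ b, (g '' (π₂ ⁻¹' {b})).OrdConnected)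
    (k : A) (b : B) : ((g ∘ f) '' (π₁ ⁻¹' {k} ∩ (π₂ ∘ f) ⁻¹' {b})).OrdConnected := by
  refine ⟨?_⟩
  rintro _ ⟨x₀, ⟨hx₀, hx₀'⟩, rfl⟩ _ ⟨x₁, ⟨hx₁, hx₁'⟩, rfl⟩ z hz
  obtain ⟨y, hy, rfl⟩ := (hg b).out (mem_image_of_mem g hx₀') (mem_image_of_mem g hx₁') hz
  obtain ⟨x, hx, rfl⟩ := (hf k).out (mem_image_of_mem f hx₀) (mem_image_of_mem f hx₁)
    ⟨g.le_iff_le.1 hz.1, g.le_iff_le.1 hz.2⟩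
  exact ⟨x, ⟨hx, hy⟩, rfl⟩

theorem LCE.trans_of_ccs {ℒ : Set LinOrd.{u}} (hccs : CCS ℒ) {L₁ L₂ L₃ : Type*}
    [LinearOrder L₁] [LinearOrder L₂] [LinearOrder L₃]
    (h₁₂ : LCE ℒ L₁ L₂) (h₂₃ : LCE ℒ L₂ L₃) : LCE ℒ L₁ L₃ := by
  obtain ⟨A, hA, π₁, hπ₁, hπ₁', f, hf⟩ := lce_iff.1 h₁₂
  obtain ⟨B, hB, π₂, hπ₂, hπ₂', g, hg⟩ := lce_iff.1 h₂₃
  set S : A → Set B := fun k => π₂ '' (f '' (π₁ ⁻¹' {k}))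
  have hS_mono : ∀ k₀ k₁, k₀ < k₁ → ∀ b₀ ∈ S k₀, ∀ b₁ ∈ S k₁, b₀ ≤ b₁ := by
    rintro k₀ k₁ hk _ ⟨_, ⟨x₀, rfl, rfl⟩, rfl⟩ _ ⟨_, ⟨x₁, rfl, rfl⟩, rfl⟩
    exact hπ₂ (f.monotone (hπ₁.reflect_lt hk).le)
  have hS_ne : ∀ k, (S k).Nonempty := fun k =>
    ((show (π₁ ⁻¹' {k}).Nonempty from hπ₁' k).image f).image π₂
  obtain ⟨M, hM, ⟨e⟩⟩ := hccs A hA B hB S hS_ne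
    (fun k => (hf k).image_of_monotone_surjective hπ₂ hπ₂') hS_mono
  let φ : L₁ → Σₗ k, S k := fun x => toLex ⟨π₁ x, π₂ (f x), f x, ⟨x, rfl, rfl⟩, rfl⟩
  have hφ : ∀ x, Sigma.Lex.toProdLex S (φ x) = toLex (π₁ x, π₂ (f x)) := fun _ => rfl
  have hφ_mono : Monotone φ := fun x y hxy => by
    rw [← (Sigma.Lex.toProdLex S).le_iff_le, hφ, hφ]
    exact Prod.Lex.toLex_mono ⟨hπ₁ hxy, hπ₂ (f.monotone hxy)⟩
  have hφ_surj : Surjective φ := by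
    rintro ⟨k, b, _, ⟨x, rfl, rfl⟩, rfl⟩
    exact ⟨x, rfl⟩
  refine lce_iff.2 ⟨M, hM, e ∘ φ, e.monotone.comp hφ_mono, e.surjective.comp hφ_surj,
    f.trans g, fun m => ?_⟩
  have hfiber : e ∘ φ ⁻¹' {m} = π₁ ⁻¹' {(ofLex (e.symm m)).1} ∩
      (π₂ ∘ f) ⁻¹' {((ofLex (e.symm m)).2 : B)} := by
    ext x
    simp [← e.eq_symm_apply, ← (Sigma.Lex.toProdLex S).injective.eq_iff, hφ]
  rw [hfiber]
  exact ordConnected_image_fiber_inter_fiber hf hg _ _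
theorem lce_sigmaLex_prodLex {ℒ : Set LinOrd.{u}} {K : LinOrd.{u}} (hK : K ∈ ℒ) {β : Type*}
    [LinearOrder β] {D : K → Set β} (hne : ∀ k, (D k).Nonempty) (hD : ∀ k, (D k).OrdConnected) :
    LCE ℒ (Σₗ k, D k) (K ×ₗ β) := by
  refine lce_iff.2 ⟨K, hK, fun p => (ofLex p).1,
    fun p q hpq => Prod.Lex.monotone_fst_ofLex ((Sigma.Lex.toProdLex D).monotone hpq),
    fun k => ⟨toLex ⟨k, (hne k).some, (hne k).some_mem⟩, rfl⟩, Sigma.Lex.toProdLex D, fun k => ?_⟩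
  refine ⟨?_⟩
  rintro _ ⟨⟨k₀, d₀⟩, hk₀, rfl⟩ _ ⟨⟨k₁, d₁⟩, hk₁, rfl⟩ z hz
  obtain rfl : k₀ = k := hk₀
  obtain rfl : k₁ = k₀ := hk₁
  change z ∈ Icc (toLex (k₁, (d₀ : β))) (toLex (k₁, (d₁ : β))) at hz
  rw [← toLex_ofLex z, Prod.Lex.mem_Icc_toLex_iff] at hz
  obtain ⟨hzk, hzd⟩ := hz
  refine ⟨toLex ⟨k₁, (ofLex z).2, (hD k₁).out d₀.2 d₁.2 hzd⟩, rfl, ?_⟩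
  change toLex (k₁, (ofLex z).2) = z
  rw [← hzk]
  rfl

theorem lce_sigmaLex_ordConnectedHull {ℒ : Set LinOrd.{u}} {K : Type*} [LinearOrder K]
    {γ : Type u} [LinearOrder γ] {β : Type*} [LinearOrder β] (ι : γ ↪o β) {P : K → Set γ}
    (hT : LinOrd.of ↥(⋃ k, P k) ∈ ℒ) (hconv : ∀ k, (P k).OrdConnected)
    (hmono : ∀ k₀ k₁, k₀ < k₁ → ∀ a ∈ P k₀, ∀ b ∈ P k₁, a ≤ b) :
    LCE ℒ (Σₗ k, P k) (Σₗ k, (ι '' P k).ordConnectedHull) := by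
  set D : K → Set β := fun k => (ι '' P k).ordConnectedHull
  let e : (Σₗ k, P k) ↪o Σₗ k, D k := OrderEmbedding.ofMapLEIff
    (fun p => toLex ⟨(ofLex p).1, ι (ofLex p).2,
      subset_ordConnectedHull _ (mem_image_of_mem ι (ofLex p).2.2)⟩)
    (fun p q => by
      rw [← (Sigma.Lex.toProdLex D).le_iff_le, ← (Sigma.Lex.toProdLex P).le_iff_le]
      simp [Prod.Lex.toLex_le_toLex])
  let π : (Σₗ k, P k) → ↥(⋃ k, P k) := fun p => ⟨(ofLex p).2, mem_iUnion_of_mem _ (ofLex p).2.2⟩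
  refine lce_iff.2 ⟨LinOrd.of ↥(⋃ k, P k), hT, π, fun p q hpq => ?_, ?_, e, fun t => ⟨?_⟩⟩
  · have := (Sigma.Lex.toProdLex P).monotone hpq
    rw [Sigma.Lex.toProdLex_apply, Sigma.Lex.toProdLex_apply, Prod.Lex.toLex_le_toLex] at this
    rcases this with h | ⟨-, h⟩
    · exact hmono _ _ h _ (ofLex p).2.2 _ (ofLex q).2.2
    · exact h
  · rintro ⟨t, ht⟩
    obtain ⟨k, hk⟩ := mem_iUnion.1 ht
    exact ⟨toLex ⟨k, t, hk⟩, rfl⟩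
  rintro _ ⟨⟨k₀, x₀⟩, hx₀, rfl⟩ _ ⟨⟨k₁, x₁⟩, hx₁, rfl⟩ ⟨j, d, hd⟩ ⟨hz₀, hz₁⟩
  obtain ⟨_, ⟨a, ha, rfl⟩, _, ⟨b, hb, rfl⟩, had, hdb⟩ := hd
  replace hx₀ : (x₀ : γ) = t := congrArg Subtype.val hx₀
  replace hx₁ : (x₁ : γ) = t := congrArg Subtype.val hx₁
  replace hz₀ : toLex (k₀, ι x₀) ≤ toLex (j, d) := (Sigma.Lex.toProdLex D).le_iff_le.2 hz₀
  replace hz₁ : toLex (j, d) ≤ toLex (k₁, ι x₁) := (Sigma.Lex.toProdLex D).le_iff_le.2 hz₁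
  rw [hx₀, Prod.Lex.toLex_le_toLex] at hz₀
  rw [hx₁, Prod.Lex.toLex_le_toLex] at hz₁
  -- `t` lies below every fibre after `k₀` and above every fibre before `k₁`
  have hd : d = ι t := by
    refine le_antisymm ?_ ?_
    · rcases hz₁ with h | ⟨-, h⟩
      · exact hdb.trans (ι.le_iff_le.2 (hmono _ _ h _ hb _ (hx₁ ▸ x₁.2)))
      · exact h
    · rcases hz₀ with h | ⟨-, h⟩
      · exact (ι.le_iff_le.2 (hmono _ _ h _ (hx₀ ▸ x₀.2) _ ha)).trans had
      · exact h
  subst hd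
  have ht : (t : γ) ∈ P j := (hconv j).out ha hb ⟨ι.le_iff_le.1 had, ι.le_iff_le.1 hdb⟩
  exact ⟨toLex ⟨j, t, ht⟩, rfl, rfl⟩

theorem LCE.exists_orderIso_of_not_countable_Icc {ℒ : Set LinOrd.{u}} {L : Type v} {L' : Type w}
    [LinearOrder L] [LinearOrder L'] [Countable L] (h : LCE ℒ L L')
    (hL' : ∀ u v : L', u < v → ¬ (Icc u v).Countable) : ∃ M ∈ ℒ, Nonempty (L ≃o M) := by
  obtain ⟨M, hM, π, hπ, hπ', f, hf⟩ := lce_iff.1 h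
  have hπ_strict : StrictMono π := fun x y hxy => (hπ hxy.le).lt_of_ne fun h => by
    refine hL' (f x) (f y) (f.lt_iff_lt.2 hxy) ((countable_range f).mono ?_)
    exact ((hf (π x)).out (mem_image_of_mem f rfl) (mem_image_of_mem f h.symm)).trans
      (image_subset_range _ _)
  exact ⟨M, hM, ⟨hπ_strict.orderIsoOfSurjective π hπ'⟩⟩

theorem ccs_of_forall_lce_trans {ℒ : Set LinOrd.{0}}
    (hmem : ∀ A ∈ ℒ, Nonempty ↥A ∧ Countable ↥A)
    (hdc : ∀ A ∈ ℒ, ∀ B : LinOrd.{0}, Nonempty ↥B → Countable ↥B →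
      Nonempty (↥B ↪o ↥A) → B ∈ ℒ)
    (htrans : ∀ (L₁ : Type u) (L₂ : Type v) (L₃ : Type w)
        [LinearOrder L₁] [LinearOrder L₂] [LinearOrder L₃],
        LCE ℒ L₁ L₂ → LCE ℒ L₂ L₃ → LCE ℒ L₁ L₃) : CCS ℒ := by
  intro K hK K' hK' P hPne hPconv hPmono
  obtain ⟨⟨k⟩, hKc⟩ := hmem K hK
  have hK'c := (hmem K' hK').2
  let ι : K' ↪o K' ×ₗ ℝ := OrderEmbedding.ofStrictMono (fun x => toLex (x, 0))
    fun _ _ h => Prod.Lex.toLex_strictMono (Prod.mk_lt_mk_of_lt_of_le h le_rfl)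
  have hT : LinOrd.of ↥(⋃ k, P k) ∈ ℒ := hdc K' hK' _
    ⟨⟨_, mem_iUnion_of_mem k (hPne k).some_mem⟩⟩ inferInstance ⟨OrderEmbedding.subtype _⟩
  have h₁₂ := lce_sigmaLex_ordConnectedHull ι hT hPconv hPmono
  have h₂₃ := lce_sigmaLex_prodLex hK (fun k => ((hPne k).image ι).mono (subset_ordConnectedHull _))
    fun k => ordConnected_ordConnectedHull (ι '' P k)
  have h₁₃ := (htrans _ _ _ (h₁₂.congr ULift.orderIso.symm ULift.orderIso.symm)
    (h₂₃.congr ULift.orderIso.symm ULift.orderIso.symm)).congr ULift.orderIso ULift.orderIso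
  have : Countable (Σₗ k, P k) := inferInstanceAs (Countable (Σ k, P k))
  exact h₁₃.exists_orderIso_of_not_countable_Icc fun _ _ => Prod.Lex.not_countable_Icc
    fun _ _ => Prod.Lex.not_countable_Icc fun _ _ h => by simpa using h

theorem stmt_5_general (ℒ : Set LinOrd.{0})
    (hmem : ∀ A ∈ ℒ, Nonempty ↥A ∧ Countable ↥A)
    (hdc : ∀ A ∈ ℒ, ∀ B : LinOrd.{0}, Nonempty ↥B → Countable ↥B →
      Nonempty (↥B ↪o ↥A) → B ∈ ℒ) :
    (∀ (L₁ : Type u) (L₂ : Type v) (L₃ : Type w)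
        [LinearOrder L₁] [LinearOrder L₂] [LinearOrder L₃],
        LCE ℒ L₁ L₂ → LCE ℒ L₂ L₃ → LCE ℒ L₁ L₃) ↔ CCS ℒ :=
  ⟨ccs_of_forall_lce_trans hmem hdc, fun hccs _ _ _ _ _ _ => LCE.trans_of_ccs hccs⟩

/-- For a nonempty downward closed class `ℒ` of countable linear orders,
`⊴^ℒ` is transitive iff `ℒ` is closed under convex sums. -/
theorem stmt_5 (ℒ : Set LinOrd.{0}) (hne : ℒ.Nonempty)
    (hmem : ∀ A ∈ ℒ, Nonempty ↥A ∧ Countable ↥A)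
    (hdc : ∀ A ∈ ℒ, ∀ B : LinOrd.{0}, Nonempty ↥B → Countable ↥B →
      Nonempty (↥B ↪o ↥A) → B ∈ ℒ) :
    (∀ (L₁ : Type u) (L₂ : Type v) (L₃ : Type w)
        [LinearOrder L₁] [LinearOrder L₂] [LinearOrder L₃],
        LCE ℒ L₁ L₂ → LCE ℒ L₂ L₃ → LCE ℒ L₁ L₃) ↔ CCS ℒ :=
  stmt_5_general ℒ hmem hdc
end

section
/- Let ℒ be a ccs class of countable scattered linear orders. Then there is a map from the set of open intervals of ℝ into countable linear orders which is an embedding of (Int(ℝ), ⊆) into the quasi-order ⊴^ℒ, i.e., (x,y) ⊆ (x',y') if and only if the image of (x,y) is ⊴^ℒ-below the image of (x',y'). Consequently ⊴^ℒ on countable linear orders has chains of order type (ℝ,<) and antichains of size continuum. -/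
universe u v w x

/-!
Put `Φ(a, b) = Σ_{q ∈ ℚ ∩ (a, b)} blockSize q` with `blockSize : ℚ → ℕ` injective and positive.
If `(a, b) ⊆ (a', b')`, the inclusion `Φ(a, b) → Φ(a', b')` has convex range, so the one-piece
partition witnesses `Φ(a, b) ⊴^ℒ Φ(a', b')`. Conversely, the blocks are exactly the classes of
the finite condensation (two points lie in one block iff the interval between them is finite),
and an embedding that is convex on a piece preserves this on the piece. A piece indexed by a
scattered order must contain two block starts in every rational subinterval of `(a, b)`, hence
whole blocks there; such a block is mapped onto a block of the same size, i.e. onto the block of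
the same rational, which therefore lies in `(a', b')`.
-/

open Set

theorem exists_lt_eq_of_monotone_of_not_embedding {α K : Type*} [LinearOrder α] [Countable α]
    [DenselyOrdered α] [NoMinOrder α] [NoMaxOrder α] [Nonempty α] [LinearOrder K]
    (hK : ¬ Nonempty (ℚ ↪o K)) {h : α → K} (hh : Monotone h) : ∃ x y, x < y ∧ h x = h y := by
  by_contra! hne
  obtain ⟨e⟩ := Order.iso_of_countable_dense ℚ α
  exact hK ⟨e.toOrderEmbedding.trans
    (OrderEmbedding.ofStrictMono h fun x y hxy => (hh hxy.le).lt_of_ne (hne x y hxy))⟩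

theorem Ioo_subset_Ioo_of_forall_exists_rat {a b a' b' : ℝ}
    (h : ∀ c d : ℚ, a < c → c < d → (d : ℝ) < b → ∃ q : ℚ, c < q ∧ q < d ∧ (q : ℝ) ∈ Ioo a' b') :
    Ioo a b ⊆ Ioo a' b' := by
  rintro x ⟨hax, hxb⟩
  obtain ⟨c, hac, hcx⟩ := exists_rat_btwn hax
  obtain ⟨d, hcd, hdx⟩ := exists_rat_btwn hcx
  obtain ⟨c', hxc', hc'b⟩ := exists_rat_btwn hxb
  obtain ⟨d', hc'd', hd'b⟩ := exists_rat_btwn hc'b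
  obtain ⟨q, -, hqd, hq, -⟩ := h c d hac (by exact_mod_cast hcd) (hdx.trans hxb)
  obtain ⟨q', hcq', -, -, hq'⟩ := h c' d' (hax.trans hxc') (by exact_mod_cast hc'd') hd'b
  exact ⟨hq.trans ((Rat.cast_lt.2 hqd).trans hdx), hxc'.trans ((Rat.cast_lt.2 hcq').trans hq')⟩

namespace OrderEmbedding

variable {L M : Type*} [LinearOrder L] [LinearOrder M] (g : L ↪o M) {T : Set L}

theorem image_uIcc_of_ordConnected_image (hT : (g '' T).OrdConnected) {x y : L} (hx : x ∈ T)
    (hy : y ∈ T) : g '' uIcc x y = uIcc (g x) (g y) := by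
  refine Subset.antisymm (g.monotone.image_uIcc_subset) fun z hz => ?_
  obtain ⟨w, -, rfl⟩ := hT.uIcc_subset (mem_image_of_mem g hx) (mem_image_of_mem g hy) hz
  simp_all only [mem_uIcc, g.le_iff_le, mem_image_of_mem]

theorem finite_uIcc_iff_of_ordConnected_image (hT : (g '' T).OrdConnected) {x y : L}
    (hx : x ∈ T) (hy : y ∈ T) : (uIcc (g x) (g y)).Finite ↔ (uIcc x y).Finite := by
  rw [← g.image_uIcc_of_ordConnected_image hT hx hy, finite_image_iff g.injective.injOn]

end OrderEmbedding

namespace IsConvexPartition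

variable {K : Type u} {L : Type v} [LinearOrder K] [LinearOrder L] {P : K → Set L}

noncomputable def index (hP : IsConvexPartition P) (y : L) : K := (hP.2.1 y).exists.choose

theorem mem_index (hP : IsConvexPartition P) (y : L) : y ∈ P (hP.index y) :=
  (hP.2.1 y).exists.choose_spec

theorem index_eq (hP : IsConvexPartition P) {y : L} {k : K} (hy : y ∈ P k) : hP.index y = k :=
  (hP.2.1 y).unique (hP.mem_index y) hy

theorem monotone_index (hP : IsConvexPartition P) : Monotone hP.index := by
  intro x y hxy
  by_contra! hlt
  exact hxy.not_gt ((hP.2.2 _ _).1 hlt y (hP.mem_index y) x (hP.mem_index x))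

theorem ordConnected (hP : IsConvexPartition P) (k : K) : (P k).OrdConnected := by
  refine ⟨fun x hx z hz y hy => ?_⟩
  have hxy := hP.monotone_index hy.1
  have hyz := hP.monotone_index hy.2
  rw [hP.index_eq hx] at hxy
  rw [hP.index_eq hz] at hyz
  exact le_antisymm hyz hxy ▸ hP.mem_index y

end IsConvexPartition

theorem punit_mem {ℒ : Set LinOrd.{u}} (hne : ℒ.Nonempty) (hmem : ∀ A ∈ ℒ, Nonempty ↥A)
    (hdc : ∀ A ∈ ℒ, ∀ B : LinOrd.{u}, Nonempty ↥B → Countable ↥B →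
      Nonempty (↥B ↪o ↥A) → B ∈ ℒ) : LinOrd.of PUnit ∈ ℒ := by
  obtain ⟨A, hA⟩ := hne
  obtain ⟨a⟩ := hmem A hA
  refine hdc A hA _ ⟨PUnit.unit⟩ (inferInstanceAs (Countable PUnit)) ⟨?_⟩
  exact OrderEmbedding.ofStrictMono (fun _ => a) fun x y h =>
    absurd h (Subsingleton.elim x y).not_lt

theorem lce_of_ordConnected_range {ℒ : Set LinOrd.{u}} (h1 : LinOrd.of PUnit ∈ ℒ) {L : Type v}
    {M : Type w} [LinearOrder L] [LinearOrder M] [Nonempty L] (f : L ↪o M)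
    (hf : (range f).OrdConnected) : LCE ℒ L M := by
  refine ⟨_, h1, fun _ => univ, ⟨fun _ => univ_nonempty,
    fun _ => ⟨PUnit.unit, trivial, fun _ _ => rfl⟩, fun k k' => ?_⟩, f, fun _ => image_univ ▸ hf⟩
  obtain ⟨x⟩ := ‹Nonempty L›
  exact iff_of_false (Subsingleton.elim (α := PUnit) k k').not_lt
    fun h => (h x trivial x trivial).false

namespace BlockSum

def blockSize (q : ℚ) : ℕ := Encodable.encode q + 1

theorem blockSize_injective : Function.Injective blockSize :=
  (add_left_injective 1).comp Encodable.encode_injective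

/-- The order `Σ_{q ∈ ℚ ∩ (a, b)} blockSize q`, realised inside `ℚ ×ₗ ℕ`. -/
def blockSum (a b : ℝ) : Set (ℚ ×ₗ ℕ) :=
  {p | ((ofLex p).1 : ℝ) ∈ Ioo a b ∧ (ofLex p).2 < blockSize (ofLex p).1}

variable {a b a' b' : ℝ}

instance : Countable (blockSum a b) :=
  (ofLex.injective.comp Subtype.val_injective).countable

def blockOf (x : blockSum a b) : ℚ := (ofLex x.1).1

theorem blockOf_mem (x : blockSum a b) : (blockOf x : ℝ) ∈ Ioo a b := x.2.1

def blockStart {q : ℚ} (hq : (q : ℝ) ∈ Ioo a b) : blockSum a b :=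
  ⟨toLex (q, 0), hq, Nat.succ_pos _⟩

theorem blockOf_blockStart {q : ℚ} (hq : (q : ℝ) ∈ Ioo a b) : blockOf (blockStart hq) = q := rfl

theorem blockStart_le_blockStart {q r : ℚ} (hq : (q : ℝ) ∈ Ioo a b) (hr : (r : ℝ) ∈ Ioo a b)
    (h : q ≤ r) : blockStart hq ≤ blockStart hr :=
  Prod.Lex.toLex_le_toLex.2 (h.lt_or_eq.imp_right fun h => ⟨h, le_rfl⟩)

theorem monotone_blockOf : Monotone (blockOf : blockSum a b → ℚ) :=
  fun _ _ h => Prod.Lex.monotone_fst _ _ h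

theorem lt_of_blockOf_lt {x y : blockSum a b} (h : blockOf x < blockOf y) : x < y :=
  monotone_blockOf.reflect_lt h

theorem image_snd_fiber {q : ℚ} (hq : (q : ℝ) ∈ Ioo a b) :
    (fun x : blockSum a b => (ofLex x.1).2) '' {x | blockOf x = q} = Iio (blockSize q) := by
  ext i
  constructor
  · rintro ⟨x, rfl, rfl⟩
    exact x.2.2
  · exact fun hi => ⟨⟨toLex (q, i), hq, hi⟩, rfl, rfl⟩

theorem injOn_snd_fiber (q : ℚ) :
    InjOn (fun x : blockSum a b => (ofLex x.1).2) {x | blockOf x = q} :=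
  fun _ hx _ hy h => Subtype.ext (ofLex.injective (Prod.ext (hx.trans hy.symm) h))

theorem ncard_fiber {q : ℚ} (hq : (q : ℝ) ∈ Ioo a b) :
    {x : blockSum a b | blockOf x = q}.ncard = blockSize q := by
  rw [← (injOn_snd_fiber q).ncard_image, image_snd_fiber hq, ← Finset.coe_Iio,
    ncard_coe_finset, Nat.card_Iio]

theorem finite_fiber {q : ℚ} (hq : (q : ℝ) ∈ Ioo a b) :
    {x : blockSum a b | blockOf x = q}.Finite :=
  Finite.of_finite_image (image_snd_fiber hq ▸ finite_Iio _) (injOn_snd_fiber q)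

theorem infinite_uIcc_of_blockOf_lt {x y : blockSum a b} (h : blockOf x < blockOf y) :
    (uIcc x y).Infinite := by
  have : Infinite (Ioo (blockOf x) (blockOf y)) := (Ioo_infinite h).to_subtype
  have hmem (r : Ioo (blockOf x) (blockOf y)) : ((r : ℚ) : ℝ) ∈ Ioo a b :=
    ⟨(blockOf_mem x).1.trans (by exact_mod_cast r.2.1),
      (Rat.cast_lt.2 r.2.2).trans (blockOf_mem y).2⟩
  refine infinite_of_injective_forall_mem (f := fun r => blockStart (hmem r))
    (fun r s hrs => Subtype.ext (congrArg blockOf hrs)) fun r => Icc_subset_uIcc ?_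
  exact ⟨(lt_of_blockOf_lt (y := blockStart (hmem r)) r.2.1).le,
    (lt_of_blockOf_lt (x := blockStart (hmem r)) r.2.2).le⟩

theorem blockOf_eq_iff_finite_uIcc (x y : blockSum a b) :
    blockOf x = blockOf y ↔ (uIcc x y).Finite := by
  refine ⟨fun h => (finite_fiber (blockOf_mem x)).subset fun z hz => ?_, fun hfin => ?_⟩
  · have := monotone_blockOf.image_uIcc_subset (mem_image_of_mem _ hz)
    rwa [h, uIcc_self, mem_singleton_iff, ← h] at this
  by_contra hne
  rcases lt_or_gt_of_ne hne with h | h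
  · exact infinite_uIcc_of_blockOf_lt h hfin
  · exact infinite_uIcc_of_blockOf_lt h (uIcc_comm x y ▸ hfin)

theorem blockOf_apply_eq (g : blockSum a b ↪o blockSum a' b') {T : Set (blockSum a b)}
    (hT : T.OrdConnected) (hgT : (g '' T).OrdConnected) {x₀ x x₁ : blockSum a b}
    (h₀ : x₀ ∈ T) (h₁ : x₁ ∈ T) (hx₀ : blockOf x₀ < blockOf x) (hx₁ : blockOf x < blockOf x₁) :
    blockOf (g x) = blockOf x := by
  have hfiber : {y | blockOf y = blockOf x} ⊆ T := fun y hy =>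
    hT.out h₀ h₁ ⟨(lt_of_blockOf_lt (hy ▸ hx₀)).le, (lt_of_blockOf_lt (hy ▸ hx₁)).le⟩
  have hxT : x ∈ T := hfiber rfl
  have hblock {y} (hy : y ∈ T) : blockOf (g y) = blockOf (g x) ↔ blockOf y = blockOf x := by
    rw [blockOf_eq_iff_finite_uIcc, blockOf_eq_iff_finite_uIcc,
      g.finite_uIcc_iff_of_ordConnected_image hgT hy hxT]
  have himage : g '' {y | blockOf y = blockOf x} = {z | blockOf z = blockOf (g x)} := by
    refine Subset.antisymm (image_subset_iff.2 fun y hy => (hblock (hfiber hy)).2 hy)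
      fun z hz => ?_
    have hlt₀ : blockOf (g x₀) < blockOf z :=
      (hz ▸ monotone_blockOf (g.monotone (lt_of_blockOf_lt hx₀).le)).lt_of_ne
        fun h => hx₀.ne ((hblock h₀).1 (h.trans hz))
    have hlt₁ : blockOf z < blockOf (g x₁) :=
      (hz ▸ monotone_blockOf (g.monotone (lt_of_blockOf_lt hx₁).le)).lt_of_ne
        fun h => hx₁.ne' ((hblock h₁).1 (h.symm.trans hz))
    obtain ⟨w, hw, rfl⟩ := hgT.out (mem_image_of_mem g h₀) (mem_image_of_mem g h₁)
      ⟨(lt_of_blockOf_lt hlt₀).le, (lt_of_blockOf_lt hlt₁).le⟩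
    exact ⟨w, (hblock hw).1 hz, rfl⟩
  apply blockSize_injective
  rw [← ncard_fiber (blockOf_mem (g x)), ← himage, g.injective.injOn.ncard_image,
    ncard_fiber (blockOf_mem x)]

theorem lce_of_subset {ℒ : Set LinOrd.{u}} (h1 : LinOrd.of PUnit ∈ ℒ) (hab : a < b)
    (h : Ioo a b ⊆ Ioo a' b') : LCE ℒ (blockSum a b) (blockSum a' b') := by
  have hsub : blockSum a b ⊆ blockSum a' b' := fun p hp => ⟨h hp.1, hp.2⟩
  obtain ⟨q, hq⟩ : ∃ q : ℚ, (q : ℝ) ∈ Ioo a b :=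
    let ⟨q, haq, hqb⟩ := exists_rat_btwn hab; ⟨q, haq, hqb⟩
  have : Nonempty (blockSum a b) := ⟨blockStart hq⟩
  refine lce_of_ordConnected_range h1 (.ofStrictMono (inclusion hsub) fun _ _ h => h) ?_
  have hrange : range (inclusion hsub) = blockOf ⁻¹' (Rat.cast ⁻¹' Ioo a b) := by
    rw [range_inclusion]
    ext x
    exact ⟨fun hx => hx.1, fun hx => ⟨hx, x.2.2⟩⟩
  exact hrange ▸ (ordConnected_Ioo.preimage_mono Rat.cast_mono).preimage_mono monotone_blockOf

theorem subset_of_lce {ℒ : Set LinOrd.{u}} (hscat : ∀ A ∈ ℒ, ¬ Nonempty (ℚ ↪o ↥A))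
    (h : LCE ℒ (blockSum a b) (blockSum a' b')) : Ioo a b ⊆ Ioo a' b' := by
  obtain ⟨K, hK, P, hP, g, hg⟩ := h
  refine Ioo_subset_Ioo_of_forall_exists_rat fun c d hac hcd hdb => ?_
  have hmem (r : Ioo c d) : ((r : ℚ) : ℝ) ∈ Ioo a b :=
    ⟨hac.trans (Rat.cast_lt.2 r.2.1), (Rat.cast_lt.2 r.2.2).trans hdb⟩
  have hmono : Monotone fun r => blockStart (hmem r) :=
    fun r s hrs => blockStart_le_blockStart _ _ hrs
  have : Nonempty (Ioo c d) := (nonempty_Ioo.2 hcd).to_subtype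
  obtain ⟨r, s, hrs, hidx⟩ :=
    exists_lt_eq_of_monotone_of_not_embedding (hscat K hK) (hP.monotone_index.comp hmono)
  have hr := hP.mem_index (blockStart (hmem r))
  have hs : blockStart (hmem s) ∈ P (hP.index (blockStart (hmem r))) :=
    (show hP.index _ = hP.index _ from hidx) ▸ hP.mem_index _
  obtain ⟨q, hrq, hqs⟩ := exists_between hrs
  have hq :=
    blockOf_apply_eq g (hP.ordConnected _) (hg _) hr hs (x := blockStart (hmem q)) hrq hqs
  exact ⟨q, q.2.1, q.2.2, blockOf_blockStart (hmem q) ▸ hq ▸ blockOf_mem _⟩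

end BlockSum

theorem stmt_15_general (ℒ : Set LinOrd.{0}) (hne : ℒ.Nonempty)
    (hmem : ∀ A ∈ ℒ, Nonempty ↥A ∧ Countable ↥A ∧ ¬ Nonempty (ℚ ↪o ↥A))
    (hdc : ∀ A ∈ ℒ, ∀ B : LinOrd.{0}, Nonempty ↥B → Countable ↥B →
      Nonempty (↥B ↪o ↥A) → B ∈ ℒ) :
    (∃ Φ : ℝ → ℝ → LinOrd.{0}, (∀ a b : ℝ, a < b → Countable ↥(Φ a b)) ∧
        ∀ a b a' b' : ℝ, a < b → a' < b' →
          (Set.Ioo a b ⊆ Set.Ioo a' b' ↔ LCE ℒ ↥(Φ a b) ↥(Φ a' b'))) ∧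
      (∃ C : ℝ → LinOrd.{0}, (∀ r, Countable ↥(C r)) ∧
        ∀ r s : ℝ, r < s → LCE ℒ ↥(C r) ↥(C s) ∧ ¬ LCE ℒ ↥(C s) ↥(C r)) ∧
      (∃ A : ℝ → LinOrd.{0}, (∀ r, Countable ↥(A r)) ∧
        ∀ r s : ℝ, r ≠ s → ¬ LCE ℒ ↥(A r) ↥(A s)) := by
  have h1 := punit_mem hne (fun A hA => (hmem A hA).1) hdc
  have key {a b a' b' : ℝ} (hab : a < b) :
      Ioo a b ⊆ Ioo a' b' ↔ LCE ℒ (BlockSum.blockSum a b) (BlockSum.blockSum a' b') :=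
    ⟨BlockSum.lce_of_subset h1 hab, BlockSum.subset_of_lce fun A hA => (hmem A hA).2.2⟩
  refine ⟨⟨fun a b => LinOrd.of (BlockSum.blockSum a b), fun _ _ _ => inferInstance,
      fun a b a' b' hab _ => key hab⟩,
    ⟨fun r => LinOrd.of (BlockSum.blockSum 0 (Real.exp r)), fun _ => inferInstance,
      fun r s hrs => ⟨?_, fun h => ?_⟩⟩,
    ⟨fun r => LinOrd.of (BlockSum.blockSum r (r + 1)), fun _ => inferInstance, fun r s hrs h => ?_⟩⟩
  · exact (key (Real.exp_pos r)).1 (Ioo_subset_Ioo_right (Real.exp_le_exp.2 hrs.le))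
  · have := (Ioo_subset_Ioo_iff (Real.exp_pos s)).1 ((key (Real.exp_pos s)).2 h)
    exact (Real.exp_lt_exp.2 hrs).not_ge this.2
  · have := (Ioo_subset_Ioo_iff (lt_add_one r)).1 ((key (lt_add_one r)).2 h)
    exact hrs (by linarith [this.1, this.2])

/-- For a ccs class `ℒ` of countable scattered linear orders, `(Int(ℝ), ⊆)` embeds into
`⊴^ℒ` on countable linear orders; consequently there are chains of order type `(ℝ, <)`
and antichains of size continuum. -/
theorem stmt_15 (ℒ : Set LinOrd.{0}) (hne : ℒ.Nonempty)
    (hmem : ∀ A ∈ ℒ, Nonempty ↥A ∧ Countable ↥A ∧ ¬ Nonempty (ℚ ↪o ↥A))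
    (hdc : ∀ A ∈ ℒ, ∀ B : LinOrd.{0}, Nonempty ↥B → Countable ↥B →
      Nonempty (↥B ↪o ↥A) → B ∈ ℒ)
    (hccs : CCS ℒ) :
    (∃ Φ : ℝ → ℝ → LinOrd.{0}, (∀ a b : ℝ, a < b → Countable ↥(Φ a b)) ∧
        ∀ a b a' b' : ℝ, a < b → a' < b' →
          (Set.Ioo a b ⊆ Set.Ioo a' b' ↔ LCE ℒ ↥(Φ a b) ↥(Φ a' b'))) ∧
      (∃ C : ℝ → LinOrd.{0}, (∀ r, Countable ↥(C r)) ∧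
        ∀ r s : ℝ, r < s → LCE ℒ ↥(C r) ↥(C s) ∧ ¬ LCE ℒ ↥(C s) ↥(C r)) ∧
      (∃ A : ℝ → LinOrd.{0}, (∀ r, Countable ↥(A r)) ∧
        ∀ r s : ℝ, r ≠ s → ¬ LCE ℒ ↥(A r) ↥(A s)) :=
  stmt_15_general ℒ hne hmem hdc
end
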